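/- Let M = [[A, B], [C, D]] ∈ ℂ^{2n×2n} where A and D are *-DMP. If BC = 0, CB = 0, CA = DC, AC* = C*D, and ∑_{i=1}^{m} A^{m−i} B D^{i−1} D^π = 0 and ∑_{i=1}^{m} A^{i−1} A^π B D^{m−i} = 0 for some m ≥ max{i(A), i(D)}, then M is *-DMP. -/

import Mathlib

/-- Moore–Penrose inverse. -/
def IsMP {A : Type*} [Ring A] [StarRing A] (a x : A) : Prop :=
  a * x * a = a ∧ x * a * x = x ∧ star (a * x) = a * x ∧ star (x * a) = x * a

/-- Group inverse. -/
def IsGroupInv {A : Type*} [Ring A] (a x : A) : Prop :=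
  a * x * a = a ∧ x * a * x = x ∧ a * x = x * a

/-- `a` is *-DMP: some power `a ^ n` (`n ≥ 1`) has a common Moore–Penrose and group inverse. -/
def IsStarDMP {A : Type*} [Ring A] [StarRing A] (a : A) : Prop :=
  ∃ n : ℕ, 1 ≤ n ∧ ∃ x : A, IsMP (a ^ n) x ∧ IsGroupInv (a ^ n) x

/-- `x` is the Drazin inverse of `a` (with some index `k`). -/
def IsDrazin {A : Type*} [Ring A] (a x : A) : Prop :=
  ∃ k : ℕ, x * a ^ (k + 1) = a ^ k ∧ a * x ^ 2 = x ∧ a * x = x * a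

/-- `x` is the pseudo core inverse of `a`. -/
def IsPCore {A : Type*} [Ring A] [StarRing A] (a x : A) : Prop :=
  ∃ k : ℕ, x * a ^ (k + 1) = a ^ k ∧ a * x ^ 2 = x ∧ star (a * x) = a * x

/-- EP element: common group and Moore–Penrose inverse. -/
def IsEP {A : Type*} [Ring A] [StarRing A] (a : A) : Prop :=
  ∃ x : A, IsMP a x ∧ IsGroupInv a x

/-!
Write `M = P + Q` with `P = [[A, B], [0, D]]` and `Q = [[0, 0], [C, 0]]`. By telescoping, the two
sum conditions give `A^π B D^D = 0` and `A^D B D^π = 0`, which make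
`Z = [[A^D, -A^D B D^D], [0, D^D]]` a Drazin inverse of `P` with `P Z = diag(A A^D, D D^D)`.
The conditions on `C` make `Q` a square-zero element commuting with `P` and `Z`, so `Z - Z² Q` is a
Drazin inverse of `M` with `M (Z - Z² Q) = P Z`. Since `A` and `D` are *-DMP this idempotent is
Hermitian, and an element with a Drazin inverse `x` such that `a x` is Hermitian is *-DMP.
-/

section Ring

variable {R : Type*} [Ring R]

lemma pow_sub_mul_of_isIdempotentElem {e a : R} (he : IsIdempotentElem e) (hc : Commute e a)
    (n : ℕ) : (a - e * a) ^ (n + 1) = a ^ (n + 1) - e * a ^ (n + 1) := by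
  have : a - e * a = (1 - e) * a := by rw [sub_mul, one_mul]
  rw [this, ((Commute.one_left a).sub_left hc).mul_pow, he.one_sub.pow_succ_eq, sub_mul, one_mul]

lemma eq_zero_of_sum_pow_mul_pow_eq_zero {u v c : R} {m : ℕ}
    (hsum : ∑ j ∈ Finset.range m, u ^ j * c * v ^ j = 0) (hm : u ^ m * c * v ^ m = 0) :
    c = 0 := by
  have hshift : u * (∑ j ∈ Finset.range m, u ^ j * c * v ^ j) * v
      = ∑ j ∈ Finset.range m, u ^ (j + 1) * c * v ^ (j + 1) := by
    rw [Finset.mul_sum, Finset.sum_mul]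
    exact Finset.sum_congr rfl fun j _ => by rw [pow_succ', pow_succ]; simp only [mul_assoc]
  have htel := Finset.sum_range_sub' (fun j => u ^ j * c * v ^ j) m
  rw [Finset.sum_sub_distrib, ← hshift, hsum, hm] at htel
  simpa using htel.symm

end Ring

namespace IsDrazin

variable {R : Type*} [Ring R] {a x : R}

lemma commute (h : IsDrazin a x) : Commute a x := h.choose_spec.2.2

lemma mul_sq (h : IsDrazin a x) : a * x ^ 2 = x := h.choose_spec.2.1

lemma mul_mul_self (h : IsDrazin a x) : x * a * x = x := by
  rw [← h.commute.eq, mul_assoc, ← sq, h.mul_sq]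

lemma isIdempotentElem (h : IsDrazin a x) : IsIdempotentElem (a * x) := by
  rw [IsIdempotentElem, mul_assoc, ← mul_assoc x, h.mul_mul_self]

lemma exists_mul_mul_pow (h : IsDrazin a x) : ∃ k, ∀ n, k ≤ n → a * x * a ^ n = a ^ n := by
  obtain ⟨k, hk, -, hc⟩ := id h
  refine ⟨k, fun n hn => ?_⟩
  obtain ⟨t, rfl⟩ := Nat.exists_eq_add_of_le hn
  rw [hc, mul_assoc, ← pow_succ', show k + t + 1 = k + 1 + t by omega, pow_add, ← mul_assoc, hk,
    ← pow_add]

lemma isNilpotent_sub (h : IsDrazin a x) : IsNilpotent (a - a * x * a) := by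
  obtain ⟨k, hk⟩ := h.exists_mul_mul_pow
  exact ⟨k + 1, by rw [pow_sub_mul_of_isIdempotentElem h.isIdempotentElem
    ((Commute.refl a).mul_left h.commute.symm), hk _ k.le_succ, sub_self]⟩

lemma of_isNilpotent (hsq : a * x ^ 2 = x) (hc : Commute a x)
    (hnil : IsNilpotent (a - a * x * a)) : IsDrazin a x := by
  have he : IsIdempotentElem (a * x) := by
    rw [IsIdempotentElem, mul_assoc, ← mul_assoc x, ← hc.eq, mul_assoc, ← sq, hsq]
  obtain ⟨k, hk⟩ := hnil
  refine ⟨k + 1, ?_, hsq, hc⟩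
  have := pow_sub_mul_of_isIdempotentElem he ((Commute.refl a).mul_left hc.symm) k
  rw [pow_succ, hk, zero_mul, eq_comm, sub_eq_zero, hc.eq, mul_assoc, ← pow_succ'] at this
  exact this.symm

lemma mul_mul_pow_succ (h : IsDrazin a x) (n : ℕ) : a * x * x ^ (n + 1) = x ^ (n + 1) := by
  rw [mul_assoc, ← pow_succ', show n + 1 + 1 = 2 + n by omega, pow_add, ← mul_assoc, h.mul_sq,
    ← pow_succ']

lemma pow_mul_pow {n : ℕ} (h : IsDrazin a x) (hn : n ≠ 0) : a ^ n * x ^ n = a * x := by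
  rw [← h.commute.mul_pow, h.isIdempotentElem.pow_eq hn]

lemma pow_mul_pow_add_succ (h : IsDrazin a x) (n r : ℕ) :
    a ^ n * x ^ (n + r + 1) = x ^ (r + 1) := by
  rcases Nat.eq_zero_or_pos n with rfl | hn
  · simp
  · rw [add_assoc, pow_add x n, ← mul_assoc, h.pow_mul_pow hn.ne', h.mul_mul_pow_succ]

lemma unique {y : R} (hx : IsDrazin a x) (hy : IsDrazin a y) : x = y := by
  obtain ⟨k, hk⟩ := hx.exists_mul_mul_pow
  obtain ⟨l, hl⟩ := hy.exists_mul_mul_pow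
  set n := k + l + 1
  have hn : n ≠ 0 := by omega
  have hfe : a * x * (a * y) = a * y := by
    rw [← hy.pow_mul_pow hn, ← mul_assoc, hk n (by omega)]
  have hef : a * x * (a * y) = a * x := by
    rw [← hx.pow_mul_pow hn, (hx.commute.pow_pow n n).eq, mul_assoc,
      ← (((Commute.refl a).mul_left hy.commute.symm).pow_right n).eq, hl n (by omega)]
  calc x = x * (a * x) := by rw [← mul_assoc, hx.mul_mul_self]
    _ = x * (a * y) := by rw [← hef, hfe]
    _ = a * x * y := by rw [← mul_assoc, hx.commute.eq]
    _ = a * y * y := by rw [← hef, hfe]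
    _ = y := by rw [mul_assoc, ← sq, hy.mul_sq]

lemma pow {s : ℕ} (h : IsDrazin a x) (hs : s ≠ 0) : IsDrazin (a ^ s) (x ^ s) := by
  obtain ⟨k, hk⟩ := h.exists_mul_mul_pow
  obtain ⟨t, rfl⟩ := Nat.exists_eq_succ_of_ne_zero hs
  refine of_isNilpotent ?_ (h.commute.pow_pow _ _) ⟨k + 1, ?_⟩
  · rw [sq, ← mul_assoc, h.pow_mul_pow hs, h.mul_mul_pow_succ]
  · rw [h.pow_mul_pow hs, pow_sub_mul_of_isIdempotentElem h.isIdempotentElem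
      (((Commute.refl a).mul_left h.commute.symm).pow_right _), ← pow_mul,
      hk _ (by nlinarith), sub_self]

lemma mul_eq_mul_of_mul_eq {b c y : R} (hx : IsDrazin a x) (hy : IsDrazin b y)
    (hc : c * a = b * c) : c * x = y * c := by
  obtain ⟨k, hk⟩ := hx.exists_mul_mul_pow
  obtain ⟨l, hl⟩ := hy.exists_mul_mul_pow
  set n := k + l
  have hcn : c * a ^ n = b ^ n * c := (SemiconjBy.pow_right hc n)
  have hyc : y * c * (a * x) = y * c := by
    have hyc' : y * c = y ^ (n + 1) * (c * a ^ n) := by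
      rw [hcn, ← mul_assoc, ← (hy.commute.pow_pow n (n + 1)).eq, hy.pow_mul_pow_add_succ n 0,
        zero_add, pow_one]
    rw [hyc', mul_assoc, mul_assoc, (((Commute.refl a).mul_right hx.commute).pow_left n).eq,
      hk n (by omega)]
  have hcx : b * y * (c * x) = c * x := by
    have hcx' : c * x = b ^ n * (c * x ^ (n + 1)) := by
      rw [← mul_assoc, ← hcn, mul_assoc, hx.pow_mul_pow_add_succ n 0, zero_add, pow_one]
    rw [hcx', ← mul_assoc, hl n (by omega)]
  calc c * x = b * y * (c * x) := hcx.symm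
    _ = y * (b * c) * x := by rw [hy.commute.eq]; simp only [mul_assoc]
    _ = y * c := by rw [← hc, ← mul_assoc y c a, mul_assoc (y * c) a x, hyc]

lemma add_mul_sub_sq_mul {q : R} (hx : IsDrazin a x) (hq : q ^ 2 = 0) (hqx : Commute q x) :
    (a + q) * (x - x ^ 2 * q) = a * x := by
  rw [add_mul, mul_sub, mul_sub, ← mul_assoc, hx.mul_sq, ← mul_assoc, (hqx.pow_right 2).eq,
    mul_assoc, ← sq, hq, mul_zero, sub_zero, hqx.eq]
  abel

lemma add_of_sq_eq_zero {q : R} (hx : IsDrazin a x) (hq : q ^ 2 = 0) (haq : Commute a q)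
    (hqx : Commute q x) : IsDrazin (a + q) (x - x ^ 2 * q) := by
  have hmul := hx.add_mul_sub_sq_mul hq hqx
  have hc : Commute (a + q) (x - x ^ 2 * q) :=
    (hx.commute.sub_right ((hx.commute.pow_right 2).mul_right haq)).add_left
      (hqx.sub_right ((hqx.pow_right 2).mul_right (Commute.refl q)))
  have he_a : Commute (a * x) a := (Commute.refl a).mul_left hx.commute.symm
  have he_q : Commute (a * x) q := haq.mul_left hqx.symm
  have hnil_q : IsNilpotent (q - a * x * q) :=
    ⟨2, by
      rw [pow_sub_mul_of_isIdempotentElem hx.isIdempotentElem he_q, hq, mul_zero, sub_zero]⟩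
  have hcomm : Commute (a - a * x * a) (q - a * x * q) :=
    (haq.sub_right (he_a.symm.mul_right haq)).sub_left
      ((he_q.sub_right ((Commute.refl _).mul_right he_q)).mul_left
        (haq.sub_right (he_a.symm.mul_right haq)))
  refine of_isNilpotent ?_ hc ?_
  · have h1 : a * x * x = x := by simpa using hx.mul_mul_pow_succ 0
    rw [sq (x - _), ← mul_assoc, hmul, mul_sub, h1, ← mul_assoc, hx.mul_mul_pow_succ 1]
  · rw [hmul, mul_add, add_sub_add_comm]
    exact hcomm.isNilpotent_add hx.isNilpotent_sub hnil_q

end IsDrazin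

section StarRing

variable {R : Type*} [Ring R] {a x : R}

lemma IsGroupInv.isDrazin (h : IsGroupInv a x) : IsDrazin a x := by
  obtain ⟨h1, h2, hc⟩ := h
  refine ⟨1, ?_, ?_, hc⟩
  · rw [pow_one, sq, ← mul_assoc, ← hc, h1]
  · rw [sq, ← mul_assoc, hc, h2]

variable [StarRing R]

lemma IsStarDMP.isSelfAdjoint_mul (ha : IsStarDMP a) (hx : IsDrazin a x) :
    IsSelfAdjoint (a * x) := by
  obtain ⟨s, hs, y, hmp, hgi⟩ := ha
  have hy : y = x ^ s := hgi.isDrazin.unique (hx.pow (by omega))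
  rw [IsSelfAdjoint, ← hx.pow_mul_pow (n := s) (by omega), ← hy]
  exact hmp.2.2.1

lemma IsStarDMP.of_isDrazin (hx : IsDrazin a x) (hsa : IsSelfAdjoint (a * x)) : IsStarDMP a := by
  obtain ⟨k, hk⟩ := hx.exists_mul_mul_pow
  have hxa : x ^ (k + 1) * a ^ (k + 1) = a * x := by
    rw [← (hx.commute.pow_pow _ _).eq, hx.pow_mul_pow k.succ_ne_zero]
  have h1 : a ^ (k + 1) * x ^ (k + 1) * a ^ (k + 1) = a ^ (k + 1) := by
    rw [hx.pow_mul_pow k.succ_ne_zero, hk _ k.le_succ]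
  have h2 : x ^ (k + 1) * a ^ (k + 1) * x ^ (k + 1) = x ^ (k + 1) := by
    rw [hxa, hx.mul_mul_pow_succ]
  refine ⟨k + 1, k.succ_pos, x ^ (k + 1), ⟨h1, h2, ?_, ?_⟩, h1, h2, ?_⟩
  · rw [hx.pow_mul_pow k.succ_ne_zero]; exact hsa
  · rw [hxa]; exact hsa
  · rw [hxa, hx.pow_mul_pow k.succ_ne_zero]

end StarRing

namespace Matrix

variable {m n α : Type*} [Fintype m] [Fintype n] [Ring α]

lemma exists_fromBlocks_zero₂₁_pow [DecidableEq m] [DecidableEq n] (a : Matrix m m α)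
    (b : Matrix m n α) (d : Matrix n n α) (k : ℕ) :
    ∃ c, fromBlocks a b 0 d ^ k = fromBlocks (a ^ k) c 0 (d ^ k) := by
  induction k with
  | zero => exact ⟨0, by simp [fromBlocks_one]⟩
  | succ k ih =>
    obtain ⟨c, hc⟩ := ih
    exact ⟨a ^ k * b + c * d, by simp [pow_succ, hc, fromBlocks_multiply]⟩

lemma isNilpotent_fromBlocks_zero₂₁ [DecidableEq m] [DecidableEq n] {a : Matrix m m α}
    {d : Matrix n n α} (b : Matrix m n α) (ha : IsNilpotent a) (hd : IsNilpotent d) :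
    IsNilpotent (fromBlocks a b 0 d) := by
  obtain ⟨i, hi⟩ := ha
  obtain ⟨j, hj⟩ := hd
  obtain ⟨c, hc⟩ := exists_fromBlocks_zero₂₁_pow a b d (i + j)
  refine ⟨(i + j) + (i + j), ?_⟩
  rw [pow_add, hc, pow_eq_zero_of_le (by omega) hi, pow_eq_zero_of_le (by omega) hj,
    fromBlocks_multiply]
  simp

lemma fromBlocks_mul_fromBlocks_of_sub_mul_eq_zero [DecidableEq m] {a x : Matrix m m α}
    {d y : Matrix n n α} {b : Matrix m n α} (h : (1 - a * x) * b * y = 0) :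
    fromBlocks a b 0 d * fromBlocks x (-(x * b * y)) 0 y = fromBlocks (a * x) 0 0 (d * y) := by
  rw [Matrix.sub_mul, Matrix.sub_mul, Matrix.one_mul, sub_eq_zero] at h
  have h' : a * (x * b * y) = b * y := by rw [h]; simp only [Matrix.mul_assoc]
  simp [fromBlocks_multiply, h']

lemma fromBlocks_mul_fromBlocks_of_mul_sub_eq_zero [DecidableEq n] {a x : Matrix m m α}
    {d y : Matrix n n α} {b : Matrix m n α} (h : x * b * (1 - d * y) = 0) (hd : Commute d y) :
    fromBlocks x (-(x * b * y)) 0 y * fromBlocks a b 0 d = fromBlocks (x * a) 0 0 (y * d) := by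
  rw [Matrix.mul_sub, Matrix.mul_one, sub_eq_zero, hd.eq, ← Matrix.mul_assoc, eq_comm] at h
  simp [fromBlocks_multiply, h]

lemma isDrazin_fromBlocks_zero₂₁ [DecidableEq m] [DecidableEq n] {a x : Matrix m m α}
    {d y : Matrix n n α} {b : Matrix m n α}
    (ha : IsDrazin a x) (hd : IsDrazin d y) (h₁ : (1 - a * x) * b * y = 0)
    (h₂ : x * b * (1 - d * y) = 0) :
    IsDrazin (fromBlocks a b 0 d) (fromBlocks x (-(x * b * y)) 0 y) := by
  have hPZ := fromBlocks_mul_fromBlocks_of_sub_mul_eq_zero (d := d) h₁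
  have hZP := fromBlocks_mul_fromBlocks_of_mul_sub_eq_zero (a := a) h₂ hd.commute
  rw [← ha.commute.eq, ← hd.commute.eq, ← hPZ] at hZP
  refine IsDrazin.of_isNilpotent ?_ hZP.symm ?_
  · rw [sq, ← mul_assoc, hPZ, fromBlocks_multiply]
    have hxx : a * x * x = x := by rw [mul_assoc, ← sq, ha.mul_sq]
    have hyy : d * y * y = y := by rw [mul_assoc, ← sq, hd.mul_sq]
    simp [← Matrix.mul_assoc, hxx, hyy]
  · rw [hPZ, fromBlocks_multiply]
    simpa [sub_eq_add_neg, fromBlocks_neg, fromBlocks_add] using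
      isNilpotent_fromBlocks_zero₂₁ (b - a * x * b) ha.isNilpotent_sub hd.isNilpotent_sub

end Matrix

section SumConditions

variable {R : Type*} [Ring R] {a x b d y : R} {m : ℕ}

lemma sum_Icc_one_eq_sum_range {M : Type*} [AddCommMonoid M] (f : ℕ → M) (m : ℕ) :
    ∑ i ∈ Finset.Icc 1 m, f i = ∑ j ∈ Finset.range m, f (j + 1) := by
  rw [Finset.range_eq_Ico, Finset.sum_Ico_add' f 0 m 1]
  rfl

lemma pow_mul_one_sub_mul_eq_zero (hc : Commute a x) (hm : x * a ^ (m + 1) = a ^ m) :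
    a ^ m * (1 - a * x) = 0 := by
  rw [mul_sub, mul_one, ← mul_assoc, ← pow_succ, (hc.pow_left _).eq, hm, sub_self]

lemma sub_mul_mul_eq_zero_of_sum_eq_zero (hx : IsDrazin a x) (hy : IsDrazin d y)
    (hm : x * a ^ (m + 1) = a ^ m)
    (hsum : ∑ i ∈ Finset.Icc 1 m, a ^ (i - 1) * (1 - a * x) * b * d ^ (m - i) = 0) :
    (1 - a * x) * b * y = 0 := by
  refine eq_zero_of_sum_pow_mul_pow_eq_zero (u := a) (v := y) (m := m) ?_ ?_
  · rw [← zero_mul (y ^ m), ← hsum, sum_Icc_one_eq_sum_range, Finset.sum_mul]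
    refine Finset.sum_congr rfl fun j hj => ?_
    obtain ⟨t, rfl⟩ := Nat.exists_eq_add_of_lt (Finset.mem_range.mp hj)
    rw [show j + t + 1 - (j + 1) = t by omega, add_tsub_cancel_right, mul_assoc _ (d ^ t),
      show j + t + 1 = t + j + 1 by omega, hy.pow_mul_pow_add_succ, pow_succ']
    simp only [mul_assoc]
  · rw [← mul_assoc, ← mul_assoc, pow_mul_one_sub_mul_eq_zero hx.commute hm]
    simp

lemma mul_mul_sub_eq_zero_of_sum_eq_zero (hx : IsDrazin a x) (hy : IsDrazin d y)
    (hm : y * d ^ (m + 1) = d ^ m)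
    (hsum : ∑ i ∈ Finset.Icc 1 m, a ^ (m - i) * b * d ^ (i - 1) * (1 - d * y) = 0) :
    x * b * (1 - d * y) = 0 := by
  have hcomm (j : ℕ) : (1 - d * y) * d ^ j = d ^ j * (1 - d * y) :=
    (((Commute.one_left d).sub_left ((Commute.refl d).mul_left hy.commute.symm)).pow_right j).eq
  refine eq_zero_of_sum_pow_mul_pow_eq_zero (u := x) (v := d) (m := m) ?_ ?_
  · rw [← mul_zero (x ^ m), ← hsum, sum_Icc_one_eq_sum_range, Finset.mul_sum]
    refine Finset.sum_congr rfl fun j hj => ?_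
    obtain ⟨t, rfl⟩ := Nat.exists_eq_add_of_lt (Finset.mem_range.mp hj)
    have hxa : x ^ (j + t + 1) * a ^ t = x ^ (j + 1) := by
      rw [show j + t + 1 = t + j + 1 by omega, ← (hx.commute.pow_pow _ _).eq,
        hx.pow_mul_pow_add_succ]
    rw [show j + t + 1 - (j + 1) = t by omega, add_tsub_cancel_right]
    simp only [← mul_assoc]
    rw [hxa, pow_succ, mul_assoc _ (1 - d * y), hcomm, ← mul_assoc]
  · simp only [mul_assoc]
    rw [hcomm, pow_mul_one_sub_mul_eq_zero hy.commute hm]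
    simp

end SumConditions

variable {A : Type*} [NormedRing A] [StarRing A] [NormedAlgebra ℂ A] [CompleteSpace A]

theorem stmt15_general {n : ℕ} (A B C D AD DD : Matrix (Fin n) (Fin n) ℂ)
    (hA : IsStarDMP A) (hD : IsStarDMP D)
    (hAD : IsDrazin A AD) (hDD : IsDrazin D DD)
    (h1 : B * C = 0) (h2 : C * B = 0)
    (h3 : C * A = D * C)
    (h5 : ∃ m : ℕ, AD * A ^ (m + 1) = A ^ m ∧ DD * D ^ (m + 1) = D ^ m ∧
      (∑ i ∈ Finset.Icc 1 m, A ^ (m - i) * B * D ^ (i - 1) * (1 - D * DD)) = 0 ∧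
      (∑ i ∈ Finset.Icc 1 m, A ^ (i - 1) * (1 - A * AD) * B * D ^ (m - i)) = 0) :
    IsStarDMP (Matrix.fromBlocks A B C D) := by
  obtain ⟨m, hAm, hDm, hS₁, hS₂⟩ := h5
  set P := Matrix.fromBlocks A B 0 D
  set Q : Matrix (Fin n ⊕ Fin n) (Fin n ⊕ Fin n) ℂ := Matrix.fromBlocks 0 0 C 0
  set Z := Matrix.fromBlocks AD (-(AD * B * DD)) 0 DD
  have hB₁ : (1 - A * AD) * B * DD = 0 := sub_mul_mul_eq_zero_of_sum_eq_zero hAD hDD hAm hS₂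
  have hB₂ : AD * B * (1 - D * DD) = 0 := mul_mul_sub_eq_zero_of_sum_eq_zero hAD hDD hDm hS₁
  have hC : C * AD = DD * C := hAD.mul_eq_mul_of_mul_eq hDD h3
  have hQ : Q ^ 2 = 0 := by rw [sq, Matrix.fromBlocks_multiply]; simp
  have hPQ : Commute P Q := by
    simp [P, Q, Commute, SemiconjBy, Matrix.fromBlocks_multiply, h1, h2, h3]
  have hQZ : Commute Q Z := by
    have hZC : AD * B * DD * C = 0 := by
      rw [mul_assoc, ← hC, ← mul_assoc, mul_assoc AD, h1, mul_zero, zero_mul]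
    have hCZ : DD * C * B * DD = 0 := by rw [mul_assoc DD, h2, mul_zero, zero_mul]
    simp [Q, Z, Commute, SemiconjBy, Matrix.fromBlocks_multiply, hC, ← mul_assoc, hZC, hCZ]
  have hPZ_sa : IsSelfAdjoint (P * Z) := by
    rw [Matrix.fromBlocks_mul_fromBlocks_of_sub_mul_eq_zero hB₁]
    exact ((hA.isSelfAdjoint_mul hAD).isHermitian.fromBlocks (by simp)
      (hD.isSelfAdjoint_mul hDD).isHermitian).isSelfAdjoint
  have hP : IsDrazin P Z := Matrix.isDrazin_fromBlocks_zero₂₁ hAD hDD hB₁ hB₂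
  rw [show Matrix.fromBlocks A B C D = P + Q by simp [P, Q, Matrix.fromBlocks_add]]
  refine IsStarDMP.of_isDrazin (hP.add_of_sq_eq_zero hQ hPQ hQZ) ?_
  rwa [hP.add_mul_sub_sq_mul hQ hQZ]

theorem stmt15 {n : ℕ} (A B C D AD DD : Matrix (Fin n) (Fin n) ℂ)
    (hA : IsStarDMP A) (hD : IsStarDMP D)
    (hAD : IsDrazin A AD) (hDD : IsDrazin D DD)
    (h1 : B * C = 0) (h2 : C * B = 0)
    (h3 : C * A = D * C) (h4 : A * star C = star C * D)
    (h5 : ∃ m : ℕ, AD * A ^ (m + 1) = A ^ m ∧ DD * D ^ (m + 1) = D ^ m ∧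
      (∑ i ∈ Finset.Icc 1 m, A ^ (m - i) * B * D ^ (i - 1) * (1 - D * DD)) = 0 ∧
      (∑ i ∈ Finset.Icc 1 m, A ^ (i - 1) * (1 - A * AD) * B * D ^ (m - i)) = 0) :
    IsStarDMP (Matrix.fromBlocks A B C D) :=
  stmt15_general A B C D AD DD hA hD hAD hDD h1 h2 h3 h5
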